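/- Let q be C^{2m} on [t₁, t₂-τ] satisfying the higher-order delayed Euler--Lagrange equation ψ₁⁰ ≡ 0 and the higher-order delayed DuBois--Reymond identity d/dt[L[q]ᵐ_τ(t) − Σ_{j=1}^{m} ψ₁ʲ(t)·q^{(j)}(t)] = ∂₁L[q]ᵐ_τ(t). Suppose η, ξ, Φ are smooth along q and the invariance identity −Φ'(t) + ∂₁L[q]ᵐ_τ(t)η(t) + L[q]ᵐ_τ(t)η'(t) + Σ_{i=0}^{m} (∂_{i+2}L[q]ᵐ_τ(t) + ∂_{i+m+3}L[q]ᵐ_τ(t+τ))·ρⁱ(t) = 0 holds on [t₁, t₂-τ], where ρ⁰(t) = ξ(t) and ρⁱ(t) = (ρ^{i-1})'(t) − q^{(i)}(t)η'(t) for i = 1,…,m. Then C(t) = Σ_{j=1}^{m} ψ₁ʲ(t)·ρ^{j-1}(t) + (L[q]ᵐ_τ(t) − Σ_{j=1}^{m} ψ₁ʲ(t)·q^{(j)}(t))η(t) − Φ(t) is constant on [t₁, t₂-τ]. -/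

import Mathlib

open Set
open scoped RealInnerProductSpace

noncomputable section

/-- The trajectory jet `t ↦ (q(t), q'(t), …, q⁽ᵐ⁾(t))`. -/
def jet {n : ℕ} (m : ℕ) (q : ℝ → EuclideanSpace ℝ (Fin n)) (t : ℝ) :
    Fin (m + 1) → EuclideanSpace ℝ (Fin n) :=
  fun i => iteratedDeriv i q t

/-- `L[q]ᵐ_τ(t) = L(t, q(t), …, q⁽ᵐ⁾(t), q(t-τ), …, q⁽ᵐ⁾(t-τ))`. -/
def LqHO {n : ℕ} (m : ℕ)
    (L : ℝ → (Fin (m + 1) → EuclideanSpace ℝ (Fin n)) →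
      (Fin (m + 1) → EuclideanSpace ℝ (Fin n)) → ℝ)
    (q : ℝ → EuclideanSpace ℝ (Fin n)) (τ t : ℝ) : ℝ :=
  L t (jet m q t) (jet m q (t - τ))

/-- `∂₁L[q]ᵐ_τ(t)`: the partial derivative of `L` in its time slot. -/
def P1HO {n : ℕ} (m : ℕ)
    (L : ℝ → (Fin (m + 1) → EuclideanSpace ℝ (Fin n)) →
      (Fin (m + 1) → EuclideanSpace ℝ (Fin n)) → ℝ)
    (q : ℝ → EuclideanSpace ℝ (Fin n)) (τ t : ℝ) : ℝ :=
  deriv (fun s => L s (jet m q t) (jet m q (t - τ))) t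

/-- `∂_{k+2}L[q]ᵐ_τ(t)`: the gradient of `L` in the slot of `q⁽ᵏ⁾`,
evaluated along the delayed jet of `q`. -/
def gradQ {n : ℕ} (m : ℕ)
    (L : ℝ → (Fin (m + 1) → EuclideanSpace ℝ (Fin n)) →
      (Fin (m + 1) → EuclideanSpace ℝ (Fin n)) → ℝ)
    (q : ℝ → EuclideanSpace ℝ (Fin n)) (τ : ℝ) (k : ℕ) (t : ℝ) :
    EuclideanSpace ℝ (Fin n) :=
  gradient (fun v => L t (Function.update (jet m q t) (Fin.ofNat (m + 1) k) v)
    (jet m q (t - τ))) (jet m q t (Fin.ofNat (m + 1) k))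

/-- `∂_{k+m+3}L[q]ᵐ_τ(t)`: the gradient of `L` in the slot of the delayed
derivative `q⁽ᵏ⁾(t-τ)`, evaluated along the delayed jet of `q`. -/
def gradQτ {n : ℕ} (m : ℕ)
    (L : ℝ → (Fin (m + 1) → EuclideanSpace ℝ (Fin n)) →
      (Fin (m + 1) → EuclideanSpace ℝ (Fin n)) → ℝ)
    (q : ℝ → EuclideanSpace ℝ (Fin n)) (τ : ℝ) (k : ℕ) (t : ℝ) :
    EuclideanSpace ℝ (Fin n) :=
  gradient (fun v => L t (jet m q t)
      (Function.update (jet m q (t - τ)) (Fin.ofNat (m + 1) k) v))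
    (jet m q (t - τ) (Fin.ofNat (m + 1) k))

/-- The higher-order momentum
`ψ₁ʲ(t) = Σ_{i=0}^{m-j} (-1)ⁱ (d/dt)ⁱ [∂_{i+j+2}L[q]ᵐ_τ(t) + ∂_{i+j+m+3}L[q]ᵐ_τ(t+τ)]`. -/
def ψ₁ {n : ℕ} (m : ℕ)
    (L : ℝ → (Fin (m + 1) → EuclideanSpace ℝ (Fin n)) →
      (Fin (m + 1) → EuclideanSpace ℝ (Fin n)) → ℝ)
    (q : ℝ → EuclideanSpace ℝ (Fin n)) (τ : ℝ) (j : ℕ) (t : ℝ) :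
    EuclideanSpace ℝ (Fin n) :=
  ∑ i ∈ Finset.range (m - j + 1), ((-1 : ℝ) ^ i) •
    iteratedDeriv i
      (fun s => gradQ m L q τ (i + j) s + gradQτ m L q τ (i + j) (s + τ)) t

/-- The higher-order momentum
`ψ₂ʲ(t) = Σ_{i=0}^{m-j} (-1)ⁱ (d/dt)ⁱ ∂_{i+j+2}L[q]ᵐ_τ(t)`. -/
def ψ₂ {n : ℕ} (m : ℕ)
    (L : ℝ → (Fin (m + 1) → EuclideanSpace ℝ (Fin n)) →
      (Fin (m + 1) → EuclideanSpace ℝ (Fin n)) → ℝ)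
    (q : ℝ → EuclideanSpace ℝ (Fin n)) (τ : ℝ) (j : ℕ) (t : ℝ) :
    EuclideanSpace ℝ (Fin n) :=
  ∑ i ∈ Finset.range (m - j + 1), ((-1 : ℝ) ^ i) •
    iteratedDeriv i (fun s => gradQ m L q τ (i + j) s) t
/-- The auxiliary functions `ρ⁰ = ξ`, `ρⁱ = (ρ^{i-1})' − q⁽ⁱ⁾ η'`. -/
def ρAux {n : ℕ} (q : ℝ → EuclideanSpace ℝ (Fin n)) (η : ℝ → ℝ)
    (ξ : ℝ → EuclideanSpace ℝ (Fin n)) : ℕ → ℝ → EuclideanSpace ℝ (Fin n)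
  | 0 => ξ
  | (i + 1) => fun t => deriv (ρAux q η ξ i) t
      - deriv η t • iteratedDeriv (i + 1) q t

/-! ### Auxiliary machinery -/

section Aux

variable {n m : ℕ}

abbrev Evec (n : ℕ) := EuclideanSpace ℝ (Fin n)
abbrev Pt (n m : ℕ) := ℝ × (Fin (m+1) → Evec n) × (Fin (m+1) → Evec n)

/-- the inverse of `toDual` packaged as a genuine `ℝ`-CLM -/
def dmap (n : ℕ) : (Evec n →L[ℝ] ℝ) →L[ℝ] Evec n :=
  { toFun := fun ℓ => (InnerProductSpace.toDual ℝ (Evec n)).symm ℓ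
    map_add' := by intro a b; simp
    map_smul' := by intro c a; simp
    cont := (InnerProductSpace.toDual ℝ (Evec n)).symm.continuous }

def inc1 (n m : ℕ) (κ : Fin (m+1)) : Evec n →L[ℝ] Pt n m :=
  (0 : Evec n →L[ℝ] ℝ).prod
    (((ContinuousLinearMap.pi (Pi.single κ (ContinuousLinearMap.id ℝ (Evec n))))).prod 0)

def inc2 (n m : ℕ) (κ : Fin (m+1)) : Evec n →L[ℝ] Pt n m :=
  (0 : Evec n →L[ℝ] ℝ).prod
    ((0 : Evec n →L[ℝ] (Fin (m+1) → Evec n)).prod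
      (ContinuousLinearMap.pi (Pi.single κ (ContinuousLinearMap.id ℝ (Evec n)))))

theorem key1 (Lf : Pt n m → ℝ) (t₀ : ℝ) (a b : Fin (m+1) → Evec n) (κ : Fin (m+1))
    (hLf : DifferentiableAt ℝ Lf (t₀, a, b)) :
    gradient (fun v => Lf (t₀, Function.update a κ v, b)) (a κ)
      = dmap n ((fderiv ℝ Lf (t₀, a, b)).comp (inc1 n m κ)) := by
  have hφ : HasFDerivAt (fun v : Evec n => ((t₀, Function.update a κ v, b) : Pt n m))
      (inc1 n m κ) (a κ) :=
    HasFDerivAt.prodMk (hasFDerivAt_const t₀ _) (HasFDerivAt.prodMk (hasFDerivAt_update a _) (hasFDerivAt_const b _))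
  have hLf' : HasFDerivAt Lf (fderiv ℝ Lf (t₀, a, b)) (t₀, Function.update a κ (a κ), b) := by
    simpa [Function.update_eq_self] using hLf.hasFDerivAt
  have h2 := hLf'.comp (a κ) hφ
  show dmap n (fderiv ℝ _ (a κ)) = _
  exact congrArg (dmap n) h2.fderiv

theorem key2 (Lf : Pt n m → ℝ) (t₀ : ℝ) (a b : Fin (m+1) → Evec n) (κ : Fin (m+1))
    (hLf : DifferentiableAt ℝ Lf (t₀, a, b)) :
    gradient (fun v => Lf (t₀, a, Function.update b κ v)) (b κ)
      = dmap n ((fderiv ℝ Lf (t₀, a, b)).comp (inc2 n m κ)) := by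
  have hφ : HasFDerivAt (fun v : Evec n => ((t₀, a, Function.update b κ v) : Pt n m))
      (inc2 n m κ) (b κ) :=
    HasFDerivAt.prodMk (hasFDerivAt_const t₀ _) (HasFDerivAt.prodMk (hasFDerivAt_const a _) (hasFDerivAt_update b _))
  have hLf' : HasFDerivAt Lf (fderiv ℝ Lf (t₀, a, b)) (t₀, a, Function.update b κ (b κ)) := by
    simpa [Function.update_eq_self] using hLf.hasFDerivAt
  have h2 := hLf'.comp (b κ) hφ
  show dmap n (fderiv ℝ _ (b κ)) = _
  exact congrArg (dmap n) h2.fderiv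

variable (L : ℝ → (Fin (m + 1) → Evec n) → (Fin (m + 1) → Evec n) → ℝ)
  (q : ℝ → Evec n) (τ : ℝ)

def Lfull : Pt n m → ℝ := fun p => L p.1 p.2.1 p.2.2
def jetP : ℝ → Pt n m := fun t => (t, jet m q t, jet m q (t - τ))
def Fk (k : ℕ) : ℝ → Evec n :=
  fun s => gradQ m L q τ k s + gradQτ m L q τ k (s + τ)

theorem iterq (hq : ContDiff ℝ (2*m : ℕ) q) (k i : ℕ) (h : k + i ≤ 2*m) :
    ContDiff ℝ (k : ℕ) (iteratedDeriv i q) := by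
  rw [iteratedDeriv_eq_iterate]
  exact ContDiff.iterate_deriv' k i (hq.of_le (by exact_mod_cast h))

theorem jet_contDiff (hq : ContDiff ℝ (2*m : ℕ) q) : ContDiff ℝ (m : ℕ) (jet m q) :=
  contDiff_pi.mpr fun i => iterq q hq m i (by have := i.isLt; omega)

theorem jetP_contDiff (hq : ContDiff ℝ (2*m : ℕ) q) :
    ContDiff ℝ (m : ℕ) (jetP (n := n) (m := m) q τ) :=
  contDiff_id.prodMk ((jet_contDiff q hq).prodMk
    ((jet_contDiff q hq).comp (contDiff_id.sub contDiff_const)))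

variable (hL : ContDiff ℝ (m + 1 : ℕ)
    (fun p : ℝ × (Fin (m + 1) → Evec n) × (Fin (m + 1) → Evec n) => L p.1 p.2.1 p.2.2))
  (hq : ContDiff ℝ (2 * m : ℕ) q)

include hL in
theorem Lfull_diffAt (p : Pt n m) : DifferentiableAt ℝ (Lfull L) p :=
  (hL.differentiable (by simp)).differentiableAt

include hL in
theorem gradQ_eq (k : ℕ) (t : ℝ) :
    gradQ m L q τ k t
      = dmap n ((fderiv ℝ (Lfull L) (jetP q τ t)).comp (inc1 n m (Fin.ofNat (m+1) k))) :=
  key1 (Lfull L) t (jet m q t) (jet m q (t - τ)) (Fin.ofNat (m+1) k) (Lfull_diffAt L hL _)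

include hL in
theorem gradQτ_eq (k : ℕ) (t : ℝ) :
    gradQτ m L q τ k t
      = dmap n ((fderiv ℝ (Lfull L) (jetP q τ t)).comp (inc2 n m (Fin.ofNat (m+1) k))) :=
  key2 (Lfull L) t (jet m q t) (jet m q (t - τ)) (Fin.ofNat (m+1) k) (Lfull_diffAt L hL _)

include hL hq in
theorem gradQ_contDiff (k : ℕ) : ContDiff ℝ (m : ℕ) (gradQ m L q τ k) := by
  have h1 : ContDiff ℝ (m : ℕ)
      (fun p : Pt n m => dmap n ((fderiv ℝ (Lfull L) p).comp (inc1 n m (Fin.ofNat (m+1) k)))) :=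
    (dmap n).contDiff.comp ((hL.fderiv_right (by norm_cast)).clm_comp contDiff_const)
  have h2 := h1.comp (jetP_contDiff q τ hq)
  have heq : gradQ m L q τ k
      = (fun p : Pt n m => dmap n ((fderiv ℝ (Lfull L) p).comp (inc1 n m (Fin.ofNat (m+1) k))))
        ∘ jetP (n := n) (m := m) q τ := funext fun t => gradQ_eq L q τ hL k t
  rw [heq]; exact h2

include hL hq in
theorem gradQτ_contDiff (k : ℕ) : ContDiff ℝ (m : ℕ) (gradQτ m L q τ k) := by
  have h1 : ContDiff ℝ (m : ℕ)
      (fun p : Pt n m => dmap n ((fderiv ℝ (Lfull L) p).comp (inc2 n m (Fin.ofNat (m+1) k)))) :=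
    (dmap n).contDiff.comp ((hL.fderiv_right (by norm_cast)).clm_comp contDiff_const)
  have h2 := h1.comp (jetP_contDiff q τ hq)
  have heq : gradQτ m L q τ k
      = (fun p : Pt n m => dmap n ((fderiv ℝ (Lfull L) p).comp (inc2 n m (Fin.ofNat (m+1) k))))
        ∘ jetP (n := n) (m := m) q τ := funext fun t => gradQτ_eq L q τ hL k t
  rw [heq]; exact h2

include hL hq in
theorem Fk_contDiff (k : ℕ) : ContDiff ℝ (m : ℕ) (Fk L q τ k) :=
  (gradQ_contDiff L q τ hL hq k).add
    ((gradQτ_contDiff L q τ hL hq k).comp (contDiff_id.add contDiff_const))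

theorem hasDerivAt_iter (g : ℝ → Evec n) (hg : ContDiff ℝ (m : ℕ) g) (i : ℕ)
    (hi : i + 1 ≤ m) (t : ℝ) :
    HasDerivAt (iteratedDeriv i g) (iteratedDeriv (i+1) g t) t := by
  have h1 : ContDiff ℝ (1 : ℕ) (deriv^[i] g) :=
    ContDiff.iterate_deriv' 1 i (hg.of_le (by exact_mod_cast by omega))
  rw [← iteratedDeriv_eq_iterate] at h1
  rw [iteratedDeriv_succ]
  exact ((h1.differentiable (by norm_num)) t).hasDerivAt

theorem psi_eq (j : ℕ) : ψ₁ m L q τ j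
    = fun t => ∑ i ∈ Finset.range (m - j + 1),
        ((-1 : ℝ) ^ i) • iteratedDeriv i (Fk L q τ (i + j)) t := rfl

theorem psi_top (t : ℝ) : ψ₁ m L q τ m t = Fk L q τ m t := by
  have h : m - m + 1 = 1 := by omega
  rw [psi_eq, h]
  simp [Fk]

include hL hq in
theorem psi_hasDeriv (j : ℕ) (hj : j + 1 ≤ m) (t : ℝ) :
    HasDerivAt (ψ₁ m L q τ (j+1)) (Fk L q τ j t - ψ₁ m L q τ j t) t := by
  have hterm : ∀ i ∈ Finset.range (m - (j+1) + 1),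
      HasDerivAt (fun s => ((-1 : ℝ) ^ i) • iteratedDeriv i (Fk L q τ (i + (j+1))) s)
        (((-1 : ℝ) ^ i) • iteratedDeriv (i+1) (Fk L q τ (i + (j+1))) t) t := by
    intro i hi
    rw [Finset.mem_range] at hi
    exact (hasDerivAt_iter (Fk L q τ (i + (j+1))) (Fk_contDiff L q τ hL hq _) i
      (by omega) t).const_smul ((-1 : ℝ) ^ i)
  have hsum := HasDerivAt.fun_sum hterm
  rw [psi_eq]
  have hval : ∑ i ∈ Finset.range (m - (j+1) + 1),
      ((-1 : ℝ) ^ i) • iteratedDeriv (i+1) (Fk L q τ (i + (j+1))) t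
      = Fk L q τ j t - ψ₁ m L q τ j t := by
    have e1 : m - (j+1) + 1 = m - j := by omega
    have e2 : ψ₁ m L q τ j t = ∑ i ∈ Finset.range (m - j),
        ((-1 : ℝ) ^ (i+1)) • iteratedDeriv (i+1) (Fk L q τ (i + 1 + j)) t
        + Fk L q τ j t := by
      rw [psi_eq]
      show ∑ i ∈ Finset.range (m - j + 1), _ = _
      rw [Finset.sum_range_succ']
      simp [Fk]
    rw [e1, e2]
    have e3 : ∀ i : ℕ, i + 1 + j = i + (j + 1) := fun i => by omega
    simp only [e3, pow_succ, mul_neg_one, neg_smul, Finset.sum_neg_distrib]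
    abel
  rw [← hval]
  exact hsum


theorem LqHO_contDiff (hL : ContDiff ℝ (m + 1 : ℕ)
      (fun p : ℝ × (Fin (m + 1) → Evec n) × (Fin (m + 1) → Evec n) => L p.1 p.2.1 p.2.2))
    (hq : ContDiff ℝ (2 * m : ℕ) q) : ContDiff ℝ (m : ℕ) (LqHO m L q τ) :=
  (hL.of_le (by exact_mod_cast Nat.le_succ m)).comp (jetP_contDiff q τ hq)

variable (η : ℝ → ℝ) (ξ : ℝ → Evec n)

theorem rho_contDiff (hm : 1 ≤ m) (hq : ContDiff ℝ (2*m : ℕ) q)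
    (hη : ContDiff ℝ (m + 1 : ℕ) η) (hξ : ContDiff ℝ (m + 1 : ℕ) ξ) :
    ∀ i, i ≤ m → ContDiff ℝ ((m + 1 - i : ℕ)) (ρAux q η ξ i) := by
  intro i
  induction i with
  | zero => intro _; simpa [ρAux] using hξ
  | succ i ih =>
    intro hi
    have h1 := ih (by omega)
    rw [show m + 1 - i = (m - i) + 1 from by omega] at h1
    have h1' : ContDiff ℝ (((m - i : ℕ) : WithTop ℕ∞) + 1) (ρAux q η ξ i) := by
      exact_mod_cast h1
    have hd : ContDiff ℝ ((m - i : ℕ)) (deriv (ρAux q η ξ i)) :=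
      (contDiff_succ_iff_deriv.mp h1').2.2
    have hη' : ContDiff ℝ ((m - i : ℕ)) (deriv η) := by
      have hη2 : ContDiff ℝ (((m : ℕ) : WithTop ℕ∞) + 1) η := by exact_mod_cast hη
      exact ((contDiff_succ_iff_deriv.mp hη2).2.2).of_le (by exact_mod_cast Nat.sub_le m i)
    have hqi : ContDiff ℝ ((m - i : ℕ)) (iteratedDeriv (i+1) q) :=
      iterq q hq (m - i) (i+1) (by omega)
    have hres : ContDiff ℝ ((m - i : ℕ))
        (fun t => deriv (ρAux q η ξ i) t - deriv η t • iteratedDeriv (i+1) q t) :=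
      hd.sub (hη'.smul hqi)
    show ContDiff ℝ ((m + 1 - (i+1) : ℕ)) (ρAux q η ξ (i+1))
    rw [show m + 1 - (i+1) = m - i from by omega]
    exact hres

theorem rho_hasDeriv (hm : 1 ≤ m) (hq : ContDiff ℝ (2*m : ℕ) q)
    (hη : ContDiff ℝ (m + 1 : ℕ) η) (hξ : ContDiff ℝ (m + 1 : ℕ) ξ)
    (i : ℕ) (hi : i + 1 ≤ m) (t : ℝ) :
    HasDerivAt (ρAux q η ξ i)
      (ρAux q η ξ (i+1) t + deriv η t • iteratedDeriv (i+1) q t) t := by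
  have h1 := rho_contDiff q η ξ hm hq hη hξ i (by omega)
  have hdiff : DifferentiableAt ℝ (ρAux q η ξ i) t :=
    (h1.differentiable (by exact_mod_cast (by omega : m + 1 - i ≠ 0)) t)
  have h2 := hdiff.hasDerivAt
  have hval : ρAux q η ξ (i+1) t + deriv η t • iteratedDeriv (i+1) q t
      = deriv (ρAux q η ξ i) t := by
    show (deriv (ρAux q η ξ i) t - deriv η t • iteratedDeriv (i+1) q t) + _ = _
    abel
  rw [hval]; exact h2

end Aux

/-- Higher-order Noether theorem with time delay (first interval): along a
`C^{2m}` function `q` satisfying the higher-order delayed Euler–Lagrange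
equation `ψ₁⁰ ≡ 0` and the delayed DuBois–Reymond identity on `[t₁, t₂-τ]`,
with smooth `η, ξ, Φ` satisfying the invariance identity, the quantity
`C(t) = Σ_{j=1}^m ψ₁ʲ(t)·ρ^{j-1}(t) + (L[q]ᵐ_τ(t) − Σ_{j=1}^m ψ₁ʲ(t)·q⁽ʲ⁾(t))η(t) − Φ(t)`
is constant on `[t₁, t₂-τ]`. -/
theorem stmt_16 {n m : ℕ} (hm : 1 ≤ m)
    (L : ℝ → (Fin (m + 1) → EuclideanSpace ℝ (Fin n)) →
      (Fin (m + 1) → EuclideanSpace ℝ (Fin n)) → ℝ)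
    (hL : ContDiff ℝ (m + 1 : ℕ)
      (fun p : ℝ × (Fin (m + 1) → EuclideanSpace ℝ (Fin n)) ×
          (Fin (m + 1) → EuclideanSpace ℝ (Fin n)) => L p.1 p.2.1 p.2.2))
    (q : ℝ → EuclideanSpace ℝ (Fin n)) (hq : ContDiff ℝ (2 * m : ℕ) q)
    (t₁ t₂ τ : ℝ) (hτ : 0 < τ) (hτ' : τ < t₂ - t₁)
    (η Φ : ℝ → ℝ) (ξ : ℝ → EuclideanSpace ℝ (Fin n))
    (hη : ContDiff ℝ (m + 1 : ℕ) η) (hξ : ContDiff ℝ (m + 1 : ℕ) ξ)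
    (hΦ : ContDiff ℝ (m + 1 : ℕ) Φ)
    (hEL : ∀ t ∈ Icc t₁ (t₂ - τ), ψ₁ m L q τ 0 t = 0)
    (hDR : ∀ t ∈ Icc t₁ (t₂ - τ),
      deriv (fun s => LqHO m L q τ s
          - ∑ j ∈ Finset.Icc 1 m, ⟪ψ₁ m L q τ j s, iteratedDeriv j q s⟫) t
        = P1HO m L q τ t)
    (hInv : ∀ t ∈ Icc t₁ (t₂ - τ),
      -deriv Φ t + P1HO m L q τ t * η t + LqHO m L q τ t * deriv η t
        + ∑ i ∈ Finset.range (m + 1),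
            ⟪gradQ m L q τ i t + gradQτ m L q τ i (t + τ), ρAux q η ξ i t⟫
        = 0) :
    ∃ c : ℝ, ∀ t ∈ Icc t₁ (t₂ - τ),
      (∑ j ∈ Finset.Icc 1 m, ⟪ψ₁ m L q τ j t, ρAux q η ξ (j - 1) t⟫)
        + (LqHO m L q τ t
            - ∑ j ∈ Finset.Icc 1 m, ⟪ψ₁ m L q τ j t, iteratedDeriv j q t⟫)
          * η t
        - Φ t = c := by
  classical
  -- the conserved quantity as a function
  set B : ℝ → ℝ := fun s => LqHO m L q τ s
      - ∑ j ∈ Finset.Icc 1 m, ⟪ψ₁ m L q τ j s, iteratedDeriv j q s⟫ with hBdef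
  set Cfun : ℝ → ℝ := fun s =>
      (∑ j ∈ Finset.Icc 1 m, ⟪ψ₁ m L q τ j s, ρAux q η ξ (j - 1) s⟫)
        + B s * η s - Φ s with hCdef
  have hone : ((m + 1 : ℕ) : WithTop ℕ∞) ≠ 0 := by
    exact_mod_cast Nat.succ_ne_zero m
  have hηd : ∀ s : ℝ, HasDerivAt η (deriv η s) s :=
    fun s => (hη.differentiable hone s).hasDerivAt
  have hΦd : ∀ s : ℝ, HasDerivAt Φ (deriv Φ s) s :=
    fun s => (hΦ.differentiable hone s).hasDerivAt
  have hBdiff : ∀ s : ℝ, DifferentiableAt ℝ B s := by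
    intro s
    refine DifferentiableAt.sub ?_ ?_
    · exact ((LqHO_contDiff L q τ hL hq).differentiable (by exact_mod_cast (by omega : m ≠ 0))).differentiableAt
    · refine DifferentiableAt.fun_sum fun j hj => ?_
      rw [Finset.mem_Icc] at hj
      obtain ⟨j', rfl⟩ : ∃ j', j = j' + 1 := ⟨j - 1, by omega⟩
      exact ((psi_hasDeriv L q τ hL hq j' (by omega) s).differentiableAt).inner ℝ
        (((iterq q hq 1 (j'+1) (by omega)).differentiable (by norm_num)).differentiableAt)
  have hAder : ∀ s : ℝ,
      HasDerivAt (fun u => ∑ j ∈ Finset.Icc 1 m, ⟪ψ₁ m L q τ j u, ρAux q η ξ (j - 1) u⟫)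
        (∑ j ∈ Finset.Icc 1 m,
            (⟪ψ₁ m L q τ j s, ρAux q η ξ j s + deriv η s • iteratedDeriv j q s⟫
              + ⟪Fk L q τ (j-1) s - ψ₁ m L q τ (j-1) s, ρAux q η ξ (j-1) s⟫)) s := by
    intro s
    refine HasDerivAt.fun_sum fun j hj => ?_
    rw [Finset.mem_Icc] at hj
    obtain ⟨j', rfl⟩ : ∃ j', j = j' + 1 := ⟨j - 1, by omega⟩
    have h1 := psi_hasDeriv L q τ hL hq j' (by omega) s
    have h2 := rho_hasDeriv q η ξ hm hq hη hξ j' (by omega) s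
    exact h1.inner ℝ h2
  have hCder : ∀ s : ℝ, HasDerivAt Cfun
      ((∑ j ∈ Finset.Icc 1 m,
          (⟪ψ₁ m L q τ j s, ρAux q η ξ j s + deriv η s • iteratedDeriv j q s⟫
            + ⟪Fk L q τ (j-1) s - ψ₁ m L q τ (j-1) s, ρAux q η ξ (j-1) s⟫))
        + (deriv B s * η s + B s * deriv η s) - deriv Φ s) s := by
    intro s
    exact ((hAder s).add (((hBdiff s).hasDerivAt).mul (hηd s))).sub (hΦd s)
  -- reindexing Icc 1 m sums
  have hre : ∀ (g : ℕ → ℝ), ∑ j ∈ Finset.Icc 1 m, g j = ∑ i ∈ Finset.range m, g (i+1) := by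
    intro g
    rw [← Finset.Ico_add_one_right_eq_Icc, Finset.sum_Ico_eq_sum_range]
    rw [show m + 1 - 1 = m from rfl]
    exact Finset.sum_congr rfl fun i _ => by rw [Nat.add_comm]
  -- the derivative vanishes on the interval
  have hC0 : ∀ s ∈ Icc t₁ (t₂ - τ), HasDerivAt Cfun 0 s := by
    intro s hs
    have h := hCder s
    have hval : (∑ j ∈ Finset.Icc 1 m,
          (⟪ψ₁ m L q τ j s, ρAux q η ξ j s + deriv η s • iteratedDeriv j q s⟫
            + ⟪Fk L q τ (j-1) s - ψ₁ m L q τ (j-1) s, ρAux q η ξ (j-1) s⟫))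
        + (deriv B s * η s + B s * deriv η s) - deriv Φ s = 0 := by
      have tele : ∑ i ∈ Finset.range m,
          (⟪ψ₁ m L q τ (i+1) s, ρAux q η ξ (i+1) s⟫ - ⟪ψ₁ m L q τ i s, ρAux q η ξ i s⟫)
          = ⟪Fk L q τ m s, ρAux q η ξ m s⟫ := by
        rw [Finset.sum_range_sub (fun i => ⟪ψ₁ m L q τ i s, ρAux q η ξ i s⟫)]
        rw [hEL s hs, psi_top]
        simp
      have e1 : (∑ j ∈ Finset.Icc 1 m,
          (⟪ψ₁ m L q τ j s, ρAux q η ξ j s + deriv η s • iteratedDeriv j q s⟫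
            + ⟪Fk L q τ (j-1) s - ψ₁ m L q τ (j-1) s, ρAux q η ξ (j-1) s⟫))
          = (∑ i ∈ Finset.range m, ⟪Fk L q τ i s, ρAux q η ξ i s⟫)
            + ⟪Fk L q τ m s, ρAux q η ξ m s⟫
            + deriv η s * (∑ i ∈ Finset.range m, ⟪ψ₁ m L q τ (i+1) s, iteratedDeriv (i+1) q s⟫) := by
        rw [hre]
        rw [show (∑ i ∈ Finset.range m,
            (⟪ψ₁ m L q τ (i+1) s, ρAux q η ξ (i+1) s + deriv η s • iteratedDeriv (i+1) q s⟫
              + ⟪Fk L q τ ((i+1)-1) s - ψ₁ m L q τ ((i+1)-1) s, ρAux q η ξ ((i+1)-1) s⟫))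
            = ∑ i ∈ Finset.range m,
              (⟪Fk L q τ i s, ρAux q η ξ i s⟫
                + (⟪ψ₁ m L q τ (i+1) s, ρAux q η ξ (i+1) s⟫ - ⟪ψ₁ m L q τ i s, ρAux q η ξ i s⟫)
                + deriv η s * ⟪ψ₁ m L q τ (i+1) s, iteratedDeriv (i+1) q s⟫)
          from Finset.sum_congr rfl fun i _ => by
            simp only [Nat.add_sub_cancel, inner_add_right, real_inner_smul_right, inner_sub_left]
            ring]
        rw [Finset.sum_add_distrib, Finset.sum_add_distrib, tele, ← Finset.mul_sum]
      have hBs : B s = LqHO m L q τ s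
          - ∑ i ∈ Finset.range m, ⟪ψ₁ m L q τ (i+1) s, iteratedDeriv (i+1) q s⟫ := by
        rw [hBdef]
        simp only
        rw [hre (fun j => ⟪ψ₁ m L q τ j s, iteratedDeriv j q s⟫)]
      have hInv' := hInv s hs
      rw [Finset.sum_range_succ
        (fun i => ⟪gradQ m L q τ i s + gradQτ m L q τ i (s + τ), ρAux q η ξ i s⟫) m] at hInv'
      have hDR' : deriv B s = P1HO m L q τ s := hDR s hs
      rw [e1, hBs, hDR']
      have hFk : ∀ i, ⟪gradQ m L q τ i s + gradQτ m L q τ i (s + τ), ρAux q η ξ i s⟫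
          = ⟪Fk L q τ i s, ρAux q η ξ i s⟫ := fun i => rfl
      simp only [hFk] at hInv'
      linear_combination hInv'
    rw [hval] at h
    exact h
  -- constancy
  have ht₁ : t₁ ≤ t₂ - τ := by linarith
  have hcont : ContinuousOn Cfun (Icc t₁ (t₂ - τ)) := by
    have : ∀ s : ℝ, DifferentiableAt ℝ Cfun s := fun s => (hCder s).differentiableAt
    exact (continuous_iff_continuousAt.mpr fun s => (this s).continuousAt).continuousOn
  have hconst := constant_of_has_deriv_right_zero hcont
    (fun x hx => (hC0 x (Ico_subset_Icc_self hx)).hasDerivWithinAt)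
  exact ⟨Cfun t₁, fun t ht => hconst t ht⟩

end
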